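/- arXiv:1512.04969 — 2 statements merged into one kernel-verified Lean document; each statement's English description precedes it below -/
import Mathlib

section
/- Let F be a field, n ≥ 1, let P ∈ M_n(F) be the permutation matrix of an n-cycle (identity block I_{n−1} in the upper right, 1 in the lower-left corner), let E ∈ M_n(F) be the matrix unit with 1 in position (1,1), and let c ∈ F be nonzero. Then any unital F-subalgebra of M_n(F) containing both P and c·E equals M_n(F). -/
/-- The `n×n` cyclic permutation matrix: identity block `I_{n-1}` in the upper right and
a `1` in the lower-left corner. -/
def cycMat (F : Type*) [Semiring F] (n : ℕ) : Matrix (Fin n) (Fin n) F :=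
  Matrix.of fun k l => if (l : ℕ) = ((k : ℕ) + 1) % n then 1 else 0

/-- The matrix unit `E₁₁`, with `1` in the upper-left entry and zeros elsewhere. -/
def e11 (F : Type*) [Semiring F] (n : ℕ) : Matrix (Fin n) (Fin n) F :=
  Matrix.of fun k l => if (k : ℕ) = 0 ∧ (l : ℕ) = 0 then 1 else 0

lemma e11_apply (F : Type*) [Semiring F] (n : ℕ) (k l : Fin n) :
    e11 F n k l = if (k : ℕ) = 0 ∧ (l : ℕ) = 0 then 1 else 0 := rfl

lemma cycMat_apply (F : Type*) [Semiring F] (n : ℕ) (k l : Fin n) :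
    cycMat F n k l = if (l : ℕ) = ((k : ℕ) + 1) % n then 1 else 0 := rfl

lemma cycMat_pow_apply (F : Type*) [Field F] (n : ℕ) (hn : 0 < n) (a : ℕ) (k l : Fin n) :
    ((cycMat F n) ^ a) k l = if (l : ℕ) = ((k : ℕ) + a) % n then 1 else 0 := by
  induction a generalizing l with
  | zero =>
    simp only [pow_zero, Matrix.one_apply, Nat.add_zero, Nat.mod_eq_of_lt k.isLt]
    simp [Fin.ext_iff, eq_comm]
  | succ a ih =>
    rw [pow_succ, Matrix.mul_apply]
    rw [Finset.sum_eq_single (⟨((k : ℕ) + a) % n, Nat.mod_lt _ hn⟩ : Fin n)]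
    · rw [ih, if_pos rfl, one_mul, cycMat_apply]
      show (if (l : ℕ) = (((k : ℕ) + a) % n + 1) % n then (1:F) else 0) = _
      rw [Nat.mod_add_mod, Nat.add_assoc]
    · intro s _ hs
      rw [ih, if_neg, zero_mul]
      intro h
      exact hs (Fin.ext h)
    · intro h
      exact absurd (Finset.mem_univ _) h

lemma e11_sandwich (F : Type*) [Field F] (n : ℕ) (hn : 0 < n) (A B : Matrix (Fin n) (Fin n) F)
    (k l : Fin n) :
    (A * e11 F n * B) k l = A k ⟨0, hn⟩ * B ⟨0, hn⟩ l := by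
  rw [mul_assoc, Matrix.mul_apply]
  rw [Finset.sum_eq_single (⟨0, hn⟩ : Fin n)]
  · congr 1
    rw [Matrix.mul_apply]
    rw [Finset.sum_eq_single (⟨0, hn⟩ : Fin n)]
    · rw [e11_apply, if_pos ⟨rfl, rfl⟩, one_mul]
    · intro s _ hs
      rw [e11_apply, if_neg, zero_mul]
      rintro ⟨-, h2⟩
      exact hs (Fin.ext h2)
    · intro h; exact absurd (Finset.mem_univ _) h
  · intro t _ ht
    rw [Matrix.mul_apply]
    have : ∀ s : Fin n, e11 F n t s * B s l = 0 := by
      intro s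
      rw [e11_apply, if_neg, zero_mul]
      rintro ⟨h1, -⟩
      exact ht (Fin.ext h1)
    simp [this]
  · intro h; exact absurd (Finset.mem_univ _) h

lemma std_eq (F : Type*) [Field F] (n : ℕ) (hn : 0 < n) (i j : Fin n) :
    (cycMat F n) ^ (n - (i : ℕ)) * e11 F n * (cycMat F n) ^ (j : ℕ)
      = Matrix.single i j (1 : F) := by
  ext k l
  rw [e11_sandwich F n hn, cycMat_pow_apply F n hn, cycMat_pow_apply F n hn]
  have hi : (i : ℕ) < n := i.isLt
  have hk : (k : ℕ) < n := k.isLt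
  have hj : (j : ℕ) < n := j.isLt
  have h1 : ((0 : ℕ) = ((k : ℕ) + (n - (i : ℕ))) % n) ↔ i = k := by
    constructor
    · intro h
      obtain ⟨q, hq⟩ := Nat.dvd_of_mod_eq_zero h.symm
      have hq2 : q = 1 := by
        rcases q with _ | q
        · omega
        · rcases q with _ | q
          · rfl
          · exfalso
            have : n * (q + 1 + 1) ≥ n * 2 := Nat.mul_le_mul_left n (by omega)
            omega
      rw [hq2, Nat.mul_one] at hq
      exact Fin.ext (by omega)
    · rintro rfl
      have : ((i : ℕ) + (n - (i : ℕ))) = n := by omega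
      rw [this, Nat.mod_self]
  have h2 : ((l : ℕ) = ((0 : ℕ) + (j : ℕ)) % n) ↔ j = l := by
    rw [Nat.zero_add, Nat.mod_eq_of_lt hj, Fin.ext_iff, eq_comm]
  rw [if_congr h1 rfl rfl, if_congr h2 rfl rfl]
  show _ = (if i = k ∧ j = l then (1:F) else 0)
  by_cases hik : i = k <;> by_cases hjl : j = l <;> simp [hik, hjl]

/-- Any unital `F`-subalgebra of `M_n(F)` containing the cyclic permutation matrix `P` and a
nonzero scalar multiple `c·E₁₁` of the matrix unit `E₁₁` is all of `M_n(F)`. -/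
theorem stmt_10 (F : Type*) [Field F] (n : ℕ) (hn : 1 ≤ n) (c : F) (hc : c ≠ 0)
    (T : Subalgebra F (Matrix (Fin n) (Fin n) F))
    (hP : cycMat F n ∈ T) (hE : c • e11 F n ∈ T) :
    T = ⊤ := by
  have hn0 : 0 < n := hn
  have hE11 : e11 F n ∈ T := by
    have := T.smul_mem hE c⁻¹
    rwa [smul_smul, inv_mul_cancel₀ hc, one_smul] at this
  have hstd : ∀ i j : Fin n, Matrix.single i j (1 : F) ∈ T := by
    intro i j
    rw [← std_eq F n hn0 i j]
    exact T.mul_mem (T.mul_mem (T.pow_mem hP _) hE11) (T.pow_mem hP _)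
  rw [eq_top_iff]
  intro M _
  rw [Matrix.matrix_eq_sum_single M]
  refine T.sum_mem fun i _ => T.sum_mem fun j _ => ?_
  have : Matrix.single i j (M i j) = M i j • Matrix.single i j (1 : F) := by
    rw [Matrix.smul_single, smul_eq_mul, mul_one]
  rw [this]
  exact T.smul_mem (hstd i j) _
end

section
/- With the construction below, for every n ∈ S and every 1 ≤ i ≤ a_n, the restriction of the projection θ_{n,i} : A → M_n(F) to the subalgebra B is a surjective F-algebra homomorphism B → M_n(F). Consequently F^n, with B acting through θ_{n,i}, is a simple B-module of F-dimension n. -/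
open Matrix

/-- Index set: pairs `(n, i)` with `n ≥ 2` and `1 ≤ i ≤ a n` (here `0`-indexed: `i < a n`).
Note that `n` lies in the support `S` of `a` automatically, since `i < a n` forces `a n ≠ 0`. -/
abbrev Idx (a : ℕ → ℕ) : Type := {p : ℕ × ℕ // 2 ≤ p.1 ∧ p.2 < a p.1}

/-- The ambient algebra `A = ∏_{n ∈ S} ∏_{i=1}^{a n} M_n(F)`. -/
abbrev ConstrA (F : Type*) [Field F] (a : ℕ → ℕ) : Type _ :=
  ∀ p : Idx a, Matrix (Fin p.1.1) (Fin p.1.1) F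

/-- The element `e` whose `(n,i)` component is `λ_{n,i} • E₁₁`. -/
def elemE {F : Type*} [Field F] (a : ℕ → ℕ) (lam : Idx a → F) : ConstrA F a :=
  fun p => lam p • e11 F p.1.1

/-- The element `σ` whose `(n,i)` component is the cyclic permutation matrix `P_n`. -/
def elemS (F : Type*) [Field F] (a : ℕ → ℕ) : ConstrA F a :=
  fun p => cycMat F p.1.1
/-- `B = F⟨e, σ⟩`, the unital `F`-subalgebra of `A` generated by `e` and `σ`. -/
abbrev ConstrB (F : Type*) [Field F] (a : ℕ → ℕ) (lam : Idx a → F) :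
    Subalgebra F (ConstrA F a) :=
  Algebra.adjoin F {elemE a lam, elemS F a}

set_option maxHeartbeats 1000000
set_option synthInstance.maxHeartbeats 400000

/-- The `B`-module structure on `Fⁿ` (for the component `p = (n,i)`) in which `B` acts
through the projection `θ_{n,i} : A → M_n(F)`, i.e. `b • v = θ_{n,i}(b) ⬝ v`. -/
noncomputable def reprMod (F : Type*) [Field F] (a : ℕ → ℕ) (lam : Idx a → F) (p : Idx a) :
    Module ↥(ConstrB F a lam) (Fin p.1.1 → F) :=
  Module.compHom (Fin p.1.1 → F)
    ((Matrix.toLinAlgEquiv' :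
        Matrix (Fin p.1.1) (Fin p.1.1) F ≃ₐ[F] Module.End F (Fin p.1.1 → F)).toAlgHom.toRingHom.comp
      (((Pi.evalAlgHom F (fun q : Idx a => Matrix (Fin q.1.1) (Fin q.1.1) F) p).comp
        (ConstrB F a lam).val).toRingHom))

/-!
Left and right multiplication by the cyclic shift `P` move the matrix units `E_{ij}` along
columns and rows, so `E_{ij} = P^a E₁₁ P^b` for suitable `a, b`. Hence `λ E₁₁` (with `λ ≠ 0`)
and `P` already generate `M_n(F)`, i.e. every projection `θ_{n,i}` maps `B` onto `M_n(F)`, and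
`Fⁿ` is simple over `B` because it is simple over `M_n(F) = End_F(Fⁿ)`.
-/

open Fin.NatCast

section CyclicMatrix

variable (F : Type*) [Semiring F] (n : ℕ) [NeZero n]

theorem e11_eq_single : e11 F n = single (0 : Fin n) 0 1 := by
  ext k l
  simp only [e11, single, of_apply, Fin.ext_iff, Fin.val_zero, @eq_comm _ (0 : ℕ)]

theorem cycMat_eq_sum_single : cycMat F n = ∑ k : Fin n, single k (k + 1) (1 : F) := by
  ext k l
  rw [Matrix.sum_apply, Finset.sum_eq_single k
    (fun j _ hj => by simp only [single, of_apply]; exact if_neg fun h => hj h.1) (by simp)]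
  have hshift : (l : ℕ) = ((k : ℕ) + 1) % n ↔ k + 1 = l := by
    rw [Fin.ext_iff, Fin.val_add, Fin.val_one', Nat.add_mod_mod, eq_comm]
  simp only [cycMat, single, of_apply, hshift, true_and]

theorem single_mul_cycMat (j m : Fin n) :
    single j m (1 : F) * cycMat F n = single j (m + 1) 1 := by
  rw [cycMat_eq_sum_single, Finset.mul_sum,
    Finset.sum_eq_single m (fun k _ hk => single_mul_single_of_ne _ _ _ _ (Ne.symm hk) _)
      (by simp), single_mul_single_same, one_mul]

theorem cycMat_mul_single (j m : Fin n) :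
    cycMat F n * single j m (1 : F) = single (j - 1) m 1 := by
  rw [cycMat_eq_sum_single, Finset.sum_mul,
    Finset.sum_eq_single (j - 1)
      (fun k _ hk => single_mul_single_of_ne _ _ _ _ (fun h => hk (eq_sub_of_add_eq h)) _)
      (by simp), sub_add_cancel, single_mul_single_same, one_mul]

theorem single_mul_cycMat_pow (j m : Fin n) (k : ℕ) :
    single j m (1 : F) * cycMat F n ^ k = single j (m + k) 1 := by
  induction k with
  | zero => simp
  | succ k ih => rw [pow_succ, ← mul_assoc, ih, single_mul_cycMat, Nat.cast_succ, add_assoc]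

theorem cycMat_pow_mul_single (j m : Fin n) (k : ℕ) :
    cycMat F n ^ k * single j m (1 : F) = single (j - k) m 1 := by
  induction k with
  | zero => simp
  | succ k ih =>
    rw [pow_succ', mul_assoc, ih, cycMat_mul_single, Nat.cast_succ, sub_add_eq_sub_sub]

theorem single_eq_cycMat_pow_mul_e11_mul_cycMat_pow (i j : Fin n) :
    single i j (1 : F) = cycMat F n ^ (-i : Fin n).val * e11 F n * cycMat F n ^ j.val := by
  rw [e11_eq_single, cycMat_pow_mul_single, single_mul_cycMat_pow, Fin.cast_val_eq_self,
    Fin.cast_val_eq_self, zero_sub, neg_neg, zero_add]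

end CyclicMatrix

theorem adjoin_smul_e11_cycMat_eq_top (F : Type*) [Field F] (n : ℕ) [NeZero n] {c : F}
    (hc : c ≠ 0) : Algebra.adjoin F {c • e11 F n, cycMat F n} = ⊤ := by
  set S := Algebra.adjoin F {c • e11 F n, cycMat F n}
  have hP : cycMat F n ∈ S := Algebra.subset_adjoin (by simp)
  have hE : e11 F n ∈ S := by
    have hcE : c • e11 F n ∈ S := Algebra.subset_adjoin (by simp)
    simpa [smul_smul, hc] using S.smul_mem hcE c⁻¹
  have hsingle (i j : Fin n) : single i j (1 : F) ∈ S := by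
    rw [single_eq_cycMat_pow_mul_e11_mul_cycMat_pow]
    exact S.mul_mem (S.mul_mem (S.pow_mem hP _) hE) (S.pow_mem hP _)
  refine eq_top_iff.mpr fun M _ => ?_
  rw [matrix_eq_sum_single M]
  refine S.sum_mem fun i _ => S.sum_mem fun j _ => ?_
  rw [← mul_one (M i j), ← smul_eq_mul, ← smul_single]
  exact S.smul_mem (hsingle i j) _

theorem isSimpleModule_compHom {R S M : Type*} [Ring R] [Ring S] [AddCommGroup M] [Module S M]
    [IsSimpleModule S M] (f : R →+* S) (hf : Function.Surjective f) :
    letI := Module.compHom M f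
    IsSimpleModule R M := by
  let := Module.compHom M f
  have : RingHomSurjective f := ⟨hf⟩
  let l : M →ₛₗ[f] M := { toFun := id, map_add' := fun _ _ => rfl, map_smul' := fun _ _ => rfl }
  exact (l.isSimpleModule_iff_of_bijective Function.bijective_id).mpr inferInstance

theorem stmt_12_general (F : Type*) [Field F] (a : ℕ → ℕ) (lam : Idx a → F)
    (hlam_ne : ∀ p, lam p ≠ 0)
    (p : Idx a) :
    Function.Surjective
      ((Pi.evalAlgHom F (fun q : Idx a => Matrix (Fin q.1.1) (Fin q.1.1) F) p).comp
        (ConstrB F a lam).val) ∧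
    (letI := reprMod F a lam p
     IsSimpleModule ↥(ConstrB F a lam) (Fin p.1.1 → F)) ∧
    Module.finrank F (Fin p.1.1 → F) = p.1.1 := by
  have : NeZero p.1.1 := ⟨by have := p.2.1; omega⟩
  set θ := (Pi.evalAlgHom F (fun q : Idx a => Matrix (Fin q.1.1) (Fin q.1.1) F) p).comp
    (ConstrB F a lam).val
  have hθ : Function.Surjective θ := by
    rw [← AlgHom.range_eq_top, AlgHom.range_comp, Subalgebra.range_val, AlgHom.map_adjoin,
      Set.image_pair]
    exact adjoin_smul_e11_cycMat_eq_top F p.1.1 (hlam_ne p)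
  refine ⟨hθ, ?_, Module.finrank_fin_fun F⟩
  exact isSimpleModule_compHom _ (toLinAlgEquiv'.surjective.comp hθ)

/-- The restriction of the projection `θ_{n,i} : A → M_n(F)` to `B` is a surjective
`F`-algebra homomorphism; consequently `Fⁿ`, with `B` acting through `θ_{n,i}`, is a
simple `B`-module of `F`-dimension `n`. -/
theorem stmt_12 (F : Type*) [Field F] [IsAlgClosed F] (a : ℕ → ℕ) (lam : Idx a → F)
    (hlam_ne : ∀ p, lam p ≠ 0)
    (hlam : ∀ p q : Idx a, p.1.1 = q.1.1 → p ≠ q → lam p ≠ lam q ∧ lam p ≠ -lam q)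
    (p : Idx a) :
    Function.Surjective
      ((Pi.evalAlgHom F (fun q : Idx a => Matrix (Fin q.1.1) (Fin q.1.1) F) p).comp
        (ConstrB F a lam).val) ∧
    (letI := reprMod F a lam p
     IsSimpleModule ↥(ConstrB F a lam) (Fin p.1.1 → F)) ∧
    Module.finrank F (Fin p.1.1 → F) = p.1.1 :=
  stmt_12_general F a lam hlam_ne p
end
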